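/- Let x, y be complex numbers. Then p₁′(x,y) = 0 and p₂′(x,y) = 0 hold simultaneously if and only if (x,y) is one of the four points (0,0), (−3/2,0), (0,−3/2), (3/2,3/2), or x + y ∈ {−1/2, 1/2, 1, 2}. -/

import Mathlib

/-!
With `q(s) = (s + 1/2)(s - 1/2)(s - 1)(s - 2)` both polynomials factor as
`p₁' = 27/16 · (x - y)(2x + 2y + 3) · q(x + y)` and
`p₂' = 27/16 · x(4y - 2x - 3) · q(x + y)`.
The common factor gives the four lines; off them both cofactors must vanish, and each of the
four pairs of lines they define meets in one of the four isolated points.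
-/

/-- The polynomial p₁′ from the singular-vector relations at level 1/2. -/
noncomputable def p₁' (x y : ℂ) : ℂ :=
  -(81/32) * x + (135/64) * x^2 + (729/64) * x^3 - (297/32) * x^4 - (81/16) * x^5
    + (27/8) * x^6 + (81/32) * y - (135/64) * y^2 - (729/64) * y^3 + (297/32) * y^4
    + (81/16) * y^5 - (27/8) * y^6 - (729/64) * x * y^2 + (297/16) * x * y^3
    + (243/16) * x * y^4 - (27/2) * x * y^5 + (729/64) * x^2 * y + (81/8) * x^2 * y^3
    - (135/8) * x^2 * y^4 - (297/16) * x^3 * y - (81/8) * x^3 * y^2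
    - (243/16) * x^4 * y + (135/8) * x^4 * y^2 + (27/2) * x^5 * y

/-- The polynomial p₂′ from the singular-vector relations at level 1/2. -/
noncomputable def p₂' (x y : ℂ) : ℂ :=
  (81/32) * x - (135/64) * x^2 - (729/64) * x^3 + (297/32) * x^4 + (81/16) * x^5
    - (27/8) * x^6 - (459/64) * x * y - (243/64) * x * y^2 + 27 * x * y^3
    - (405/16) * x * y^4 + (27/4) * x * y^5 - (243/16) * x^2 * y
    + (2025/32) * x^2 * y^2 - (567/8) * x^2 * y^3 + (189/8) * x^2 * y^4
    + (729/16) * x^3 * y - (243/4) * x^3 * y^2 + 27 * x^3 * y^3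
    - (81/8) * x^4 * y + (27/4) * x^4 * y^2 - (27/4) * x^5 * y

theorem mul_eq_zero_and_mul_eq_zero_iff {M₀ : Type*} [MulZeroClass M₀] [NoZeroDivisors M₀]
    {a b c : M₀} :
    (a * c = 0 ∧ b * c = 0) ↔ (a = 0 ∧ b = 0) ∨ c = 0 := by
  simp only [mul_eq_zero, and_or_right]

noncomputable def linesQuartic (s : ℂ) : ℂ :=
  (s + 1/2) * (s - 1/2) * (s - 1) * (s - 2)

theorem linesQuartic_eq_zero_iff (s : ℂ) :
    linesQuartic s = 0 ↔ s ∈ ({-(1/2 : ℂ), (1/2 : ℂ), 1, 2} : Set ℂ) := by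
  simp only [linesQuartic, mul_eq_zero, add_eq_zero_iff_eq_neg, sub_eq_zero, or_assoc,
    Set.mem_insert_iff, Set.mem_singleton_iff]

theorem p₁'_eq (x y : ℂ) :
    p₁' x y = 27/16 * ((x - y) * (2*x + 2*y + 3) * linesQuartic (x + y)) := by
  unfold p₁' linesQuartic; ring

theorem p₂'_eq (x y : ℂ) :
    p₂' x y = 27/16 * (x * (4*y - 2*x - 3) * linesQuartic (x + y)) := by
  unfold p₂' linesQuartic; ring

theorem cofactors_eq_zero_iff (x y : ℂ) :
    ((x - y) * (2*x + 2*y + 3) = 0 ∧ x * (4*y - 2*x - 3) = 0) ↔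
      ((x, y) = (0, 0) ∨ (x, y) = (-(3/2 : ℂ), 0) ∨ (x, y) = (0, -(3/2 : ℂ)) ∨
        (x, y) = ((3/2 : ℂ), (3/2 : ℂ))) := by
  simp only [mul_eq_zero, Prod.mk.injEq]
  constructor
  · rintro ⟨hxy | hxy, hx | hx⟩
    · exact .inl ⟨hx, by linear_combination hx - hxy⟩
    · exact .inr <| .inr <| .inr ⟨by linear_combination 2 * hxy + hx / 2,
        by linear_combination hxy + hx / 2⟩
    · exact .inr <| .inr <| .inl ⟨hx, by linear_combination (hxy - 2 * hx) / 2⟩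
    · exact .inr <| .inl ⟨by linear_combination hxy / 3 - hx / 6,
        by linear_combination hxy / 6 + hx / 6⟩
  · rintro (⟨rfl, rfl⟩ | ⟨rfl, rfl⟩ | ⟨rfl, rfl⟩ | ⟨rfl, rfl⟩) <;> norm_num

/-- The common zeros of p₁′ and p₂′ are the four points (0,0), (−3/2,0), (0,−3/2),
(3/2,3/2) together with the four lines x + y ∈ {−1/2, 1/2, 1, 2}. -/
theorem stmt_9 (x y : ℂ) :
    (p₁' x y = 0 ∧ p₂' x y = 0) ↔
      ((x, y) = (0, 0) ∨ (x, y) = (-(3/2 : ℂ), 0) ∨ (x, y) = (0, -(3/2 : ℂ)) ∨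
        (x, y) = ((3/2 : ℂ), (3/2 : ℂ)) ∨
        x + y ∈ ({-(1/2 : ℂ), (1/2 : ℂ), 1, 2} : Set ℂ)) := by
  have h : (27/16 : ℂ) ≠ 0 := by norm_num
  rw [p₁'_eq, p₂'_eq, mul_eq_zero_iff_left h, mul_eq_zero_iff_left h,
    mul_eq_zero_and_mul_eq_zero_iff, cofactors_eq_zero_iff, linesQuartic_eq_zero_iff,
    or_assoc, or_assoc, or_assoc]
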